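/- arXiv:0810.4957 — 2 statements merged into one kernel-verified Lean document; each statement's English description precedes it below -/
import Mathlib

section
/- (Driver determined by one-step values) Let O_t be the set of pairs (Y_t, Y_{t+1}) where Y_t is the time-t solution of the BSDE with driver F and terminal value Y_{t+1} at time t+1. Then O_t uniquely determines the function (Y_t, Z_t) ↦ F(ω, t, Y_t, Z_t), up to a.s. equality, via F(ω,t,Y_t,Z_t) = Y_t - E[Y_{t+1}|F_t] where Z_t M_{t+1} = Y_{t+1} - E[Y_{t+1}|F_t]. -/
/-!
The σ-algebra `𝓕 t` is generated by the path `(X 0, …, X t)`, which takes finitely many values,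
so the `𝓕 t`-measurable functions are exactly the functions factoring through that path. In
particular they are bounded, and solving `y - F' ω t y (Z ω) = Y ω - F ω t (Y ω) (Z ω)` pointwise
produces another `𝓕 t`-measurable `Y'`. Since `Z_t M_{t+1}` has zero conditional expectation,
`E[Y_{t+1} | 𝓕 t] = Y_t - F(Y_t, Z_t)`, which is the recovery formula. Finally `(Y_t, Z_t)` and
`(Y', Z_t)` solve the one-step equations of `F` and `F'` with the same terminal value, so
`Y_t = Y'` a.s., whence `F = F'` a.s.
-/

open MeasureTheory TopologicalSpace Matrix

namespace Function.FactorsThrough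

variable {Ω γ E : Type*} {g : Ω → γ} {f : Ω → E}

theorem range_eq_range_comp_rangeSplitting (hf : f.FactorsThrough g) :
    Set.range f = Set.range (f ∘ Set.rangeSplitting g) := by
  refine subset_antisymm ?_ (Set.range_comp_subset_range _ _)
  rintro _ ⟨ω, rfl⟩
  exact ⟨⟨g ω, ω, rfl⟩, hf (Set.apply_rangeSplitting g _)⟩

theorem finite_range (hf : f.FactorsThrough g) (hg : (Set.range g).Finite) :
    (Set.range f).Finite := by
  have := hg.to_subtype
  rw [hf.range_eq_range_comp_rangeSplitting]
  exact Set.finite_range _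

theorem countable_range (hf : f.FactorsThrough g) (hg : (Set.range g).Countable) :
    (Set.range f).Countable := by
  have := hg.to_subtype
  rw [hf.range_eq_range_comp_rangeSplitting]
  exact Set.countable_range _

variable [mγ : MeasurableSpace γ] [MeasurableSingletonClass γ]

theorem measurable_comap [MeasurableSpace E] (hf : f.FactorsThrough g)
    (hg : (Set.range g).Countable) : Measurable[mγ.comap g] f := by
  intro B _
  refine ⟨g '' (f ⁻¹' B), (hg.mono (Set.image_subset_range _ _)).measurableSet, ?_⟩
  ext ω
  exact ⟨fun ⟨ω', hω', hgω⟩ => (hf hgω ▸ hω' : f ω ∈ B), fun hω => ⟨ω, hω, rfl⟩⟩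

theorem stronglyMeasurable_comap [TopologicalSpace E] [PseudoMetrizableSpace E]
    (hf : f.FactorsThrough g) (hg : (Set.range g).Countable) :
    StronglyMeasurable[mγ.comap g] f := by
  borelize E
  exact stronglyMeasurable_iff_measurable_separable.2
    ⟨hf.measurable_comap hg, (hf.countable_range hg).isSeparable⟩

end Function.FactorsThrough

section ComapOfFiniteRange

variable {Ω γ E : Type*} [mγ : MeasurableSpace γ] {g : Ω → γ}

theorem MeasureTheory.StronglyMeasurable.exists_bound_of_comap [NormedAddCommGroup E]
    {f : Ω → E} (hg : (Set.range g).Finite) (hf : StronglyMeasurable[mγ.comap g] f) :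
    ∃ C, ∀ ω, ‖f ω‖ ≤ C := by
  obtain ⟨C, hC⟩ := (hf.factorsThrough.finite_range hg).isBounded.exists_norm_le
  exact ⟨C, fun ω => hC _ ⟨ω, rfl⟩⟩

theorem MeasureTheory.StronglyMeasurable.integrable_of_comap [NormedAddCommGroup E]
    {m0 : MeasurableSpace Ω} {μ : Measure Ω} [IsFiniteMeasure μ] {f : Ω → E}
    (hm : mγ.comap g ≤ m0) (hg : (Set.range g).Finite) (hf : StronglyMeasurable[mγ.comap g] f) :
    Integrable f μ :=
  have ⟨C, hC⟩ := hf.exists_bound_of_comap hg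
  .of_bound (hf.mono hm).aestronglyMeasurable C (ae_of_all _ hC)

theorem exists_stronglyMeasurable_comap_apply_eq [MeasurableSingletonClass γ]
    {E' : Type*} [TopologicalSpace E] [PseudoMetrizableSpace E] [Nonempty E]
    [TopologicalSpace E'] [PseudoMetrizableSpace E'] [T1Space E']
    (hg : (Set.range g).Countable) {G : Ω → E → E'}
    (hG : ∀ y, StronglyMeasurable[mγ.comap g] fun ω => G ω y)
    {A : Ω → E'} (hA : StronglyMeasurable[mγ.comap g] A) :
    ∃ Y : Ω → E, StronglyMeasurable[mγ.comap g] Y ∧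
      ∀ ω, A ω ∈ Set.range (G ω) → G ω (Y ω) = A ω := by
  classical
  refine ⟨fun ω => Function.invFun (G ω) (A ω), Function.FactorsThrough.stronglyMeasurable_comap
    ?_ hg, fun ω hω => Function.invFun_eq hω⟩
  intro ω₁ ω₂ h
  simp only
  rw [hA.factorsThrough h, show G ω₁ = G ω₂ from funext fun y => (hG y).factorsThrough h]

end ComapOfFiniteRange

section MulVec

variable {Ω ι κ : Type*} [Fintype ι] [Fintype κ] {m m0 : MeasurableSpace Ω} {μ : Measure Ω}

variable (ι κ) in
/-- `Matrix.mulVecBilin` on `ι → κ → ℝ` rather than `Matrix ι κ ℝ`, which carries no global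
norm. -/
noncomputable def mulVecCLM : (ι → κ → ℝ) →L[ℝ] (κ → ℝ) →L[ℝ] ι → ℝ :=
  (Matrix.mulVecBilin ℝ ℝ : (ι → κ → ℝ) →ₗ[ℝ] (κ → ℝ) →ₗ[ℝ] ι → ℝ).toContinuousBilinearMap

theorem MeasureTheory.StronglyMeasurable.mulVec {Z : Ω → ι → κ → ℝ} {V : Ω → κ → ℝ}
    (hZ : StronglyMeasurable[m] Z) (hV : StronglyMeasurable[m] V) :
    StronglyMeasurable[m] fun ω => Z ω *ᵥ V ω :=
  (mulVecCLM ι κ).continuous₂.comp_stronglyMeasurable (hZ.prodMk hV)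

theorem condExp_sub_condExp_ae_eq_zero {E : Type*} [NormedAddCommGroup E] [NormedSpace ℝ E]
    [CompleteSpace E] (hm : m ≤ m0) [SigmaFinite (μ.trim hm)] {X : Ω → E}
    (hX : Integrable X μ) : μ[X - μ[X | m] | m] =ᵐ[μ] 0 := by
  filter_upwards [condExp_sub hX integrable_condExp m] with ω hω
  rw [hω, condExp_of_stronglyMeasurable hm stronglyMeasurable_condExp integrable_condExp,
    Pi.sub_apply, sub_self, Pi.zero_apply]

variable [IsFiniteMeasure μ] {Z : Ω → ι → κ → ℝ} {V : Ω → κ → ℝ} {C : ℝ}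

theorem condExp_mulVec_of_stronglyMeasurable_left (hm : m ≤ m0) (hZ : StronglyMeasurable[m] Z)
    (hZC : ∀ ω, ‖Z ω‖ ≤ C) (hV : Integrable V μ) :
    μ[fun ω => Z ω *ᵥ V ω | m] =ᵐ[μ] fun ω => Z ω *ᵥ μ[V | m] ω :=
  condExp_stronglyMeasurable_bilin_of_bound (mulVecCLM ι κ) hm hZ hV C (ae_of_all _ hZC)

theorem condExp_add_mulVec_of_condExp_eq_zero (hm : m ≤ m0) {A : Ω → ι → ℝ}
    (hA : StronglyMeasurable[m] A) (hAint : Integrable A μ) (hZ : StronglyMeasurable[m] Z)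
    (hZC : ∀ ω, ‖Z ω‖ ≤ C) (hV : Integrable V μ) (hV0 : μ[V | m] =ᵐ[μ] 0) :
    μ[fun ω => A ω + Z ω *ᵥ V ω | m] =ᵐ[μ] A := by
  have hZV : Integrable (fun ω => Z ω *ᵥ V ω) μ :=
    (mulVecCLM ι κ).integrable_of_bilin_of_bdd_left C (hZ.mono hm).aestronglyMeasurable
      (ae_of_all _ hZC) hV
  filter_upwards [condExp_add hAint hZV m, condExp_mulVec_of_stronglyMeasurable_left hm hZ hZC hV,
    hV0] with ω hadd hpull hzero
  change μ[A + fun ω => Z ω *ᵥ V ω | m] ω = A ω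
  rw [hadd, Pi.add_apply, condExp_of_stronglyMeasurable hm hA hAint, hpull, hzero, Pi.zero_apply]
  exact add_eq_left.2 (Matrix.mulVec_zero (Z ω))

end MulVec

theorem norm_le_max_of_forall_abs_le {ι κ : Type*} [Fintype ι] [Fintype κ] {z : ι → κ → ℝ}
    {C : ℝ} (h : ∀ i j, |z i j| ≤ C) : ‖z‖ ≤ max C 0 :=
  (pi_norm_le_iff_of_nonneg (le_max_right _ _)).2 fun i =>
    (pi_norm_le_iff_of_nonneg (le_max_right _ _)).2 fun j => (h i j).trans (le_max_left _ _)

section History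

variable {Ω β : Type*} {m0 : MeasurableSpace Ω} {X : ℕ → Ω → β}

theorem finite_range_history {S : Set β} (hS : S.Finite) (hX : ∀ s ω, X s ω ∈ S) (t : ℕ) :
    (Set.range fun ω (s : Fin (t + 1)) => X s ω).Finite :=
  (Set.Finite.pi fun _ => hS).subset (by rintro _ ⟨ω, rfl⟩; exact fun s _ => hX s ω)

theorem measurable_comap_history [MeasurableSpace β] (t : ℕ) :
    Measurable[MeasurableSpace.comap (fun ω (s : Fin (t + 1)) => X (s : ℕ) ω) inferInstance]
      (X t) :=
  (measurable_pi_apply (X := fun _ : Fin (t + 1) => β) (Fin.last t)).comp (comap_measurable _)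

end History
theorem driver_determined_by_one_step_values_general
    {Ω : Type*} {m0 : MeasurableSpace Ω} {μ : Measure Ω} [IsProbabilityMeasure μ]
    {N K : ℕ} (𝓕 : Filtration ℕ m0)
    (X : ℕ → Ω → (Fin N → ℝ))
    (hXval : ∀ t ω, ∃ i : Fin N, X t ω = fun j => if j = i then (1 : ℝ) else 0)
    (h𝓕 : ∀ t, (𝓕 t : MeasurableSpace Ω)
      = MeasurableSpace.comap (fun ω (s : Fin (t + 1)) => X (s : ℕ) ω) inferInstance)
    (M : ℕ → Ω → (Fin N → ℝ))
    (hM : ∀ t, M t = X t - μ[X t | 𝓕 (t - 1)])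
    (t : ℕ)
    (F F' : Ω → ℕ → (Fin K → ℝ) → (Fin K → Fin N → ℝ) → (Fin K → ℝ))
    (hFmeas : ∀ G ∈ [F, F'], ∀ (Y : Ω → Fin K → ℝ) (Z : Ω → Fin K → Fin N → ℝ),
      StronglyMeasurable[𝓕 t] Y → StronglyMeasurable[𝓕 t] Z →
      StronglyMeasurable[𝓕 t] (fun ω => G ω t (Y ω) (Z ω)))
    (hFbij : ∀ G ∈ [F, F'], ∀ Z : Ω → Fin K → Fin N → ℝ,
      ∀ᵐ ω ∂μ, Function.Bijective (fun y : Fin K → ℝ => y - G ω t y (Z ω)))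
    -- F and F' generate the same one-step values 𝔒_t: for every terminal value Y_{t+1},
    -- the corresponding time-t solutions agree
    (hO : ∀ Ynext : Ω → Fin K → ℝ,
      StronglyMeasurable[𝓕 (t + 1)] Ynext → (∃ C, ∀ ω, ‖Ynext ω‖ ≤ C) →
      ∀ (Yt : Ω → Fin K → ℝ) (Zt : Ω → Fin K → Fin N → ℝ)
        (Yt' : Ω → Fin K → ℝ) (Zt' : Ω → Fin K → Fin N → ℝ),
        StronglyMeasurable[𝓕 t] Yt → StronglyMeasurable[𝓕 t] Zt →
        StronglyMeasurable[𝓕 t] Yt' → StronglyMeasurable[𝓕 t] Zt' →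
        (∀ᵐ ω ∂μ, Yt ω - F ω t (Yt ω) (Zt ω)
            + (fun i => ∑ j, Zt ω i j * M (t + 1) ω j) = Ynext ω) →
        (∀ᵐ ω ∂μ, Yt' ω - F' ω t (Yt' ω) (Zt' ω)
            + (fun i => ∑ j, Zt' ω i j * M (t + 1) ω j) = Ynext ω) →
        Yt =ᵐ[μ] Yt') :
    -- conclusion: the driver is recovered from 𝔒_t and hence uniquely determined
    (∀ (Yt : Ω → Fin K → ℝ) (Zt : Ω → Fin K → Fin N → ℝ),
      StronglyMeasurable[𝓕 t] Yt → (∃ C, ∀ ω, ‖Yt ω‖ ≤ C) →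
      StronglyMeasurable[𝓕 t] Zt → (∃ C, ∀ ω i j, |Zt ω i j| ≤ C) →
      (fun ω => F ω t (Yt ω) (Zt ω)) =ᵐ[μ]
        fun ω => Yt ω - (μ[(fun ω' => Yt ω' - F ω' t (Yt ω') (Zt ω')
            + (fun i => ∑ j, Zt ω' i j * M (t + 1) ω' j)) | 𝓕 t]) ω) ∧
    (∀ (Yt : Ω → Fin K → ℝ) (Zt : Ω → Fin K → Fin N → ℝ),
      StronglyMeasurable[𝓕 t] Yt → (∃ C, ∀ ω, ‖Yt ω‖ ≤ C) →
      StronglyMeasurable[𝓕 t] Zt → (∃ C, ∀ ω i j, |Zt ω i j| ≤ C) →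
      (fun ω => F ω t (Yt ω) (Zt ω)) =ᵐ[μ] fun ω => F' ω t (Yt ω) (Zt ω)) := by
  have hfin : ∀ s, (Set.range fun ω (r : Fin (s + 1)) => X r ω).Finite :=
    finite_range_history (Set.finite_range fun (i j : Fin N) => if j = i then (1 : ℝ) else 0)
      fun s ω => (hXval s ω).imp fun _ h => h.symm
  have hint : ∀ s {E : Type} [NormedAddCommGroup E] {f : Ω → E}, StronglyMeasurable[𝓕 s] f →
      Integrable f μ := fun s _ _ _ hf =>
    StronglyMeasurable.integrable_of_comap (h𝓕 s ▸ 𝓕.le s) (hfin s) (h𝓕 s ▸ hf)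
  have hX : StronglyMeasurable[𝓕 (t + 1)] (X (t + 1)) :=
    (h𝓕 (t + 1) ▸ measurable_comap_history (t + 1)).stronglyMeasurable
  have hMt : M (t + 1) = X (t + 1) - μ[X (t + 1) | 𝓕 t] := by simpa using hM (t + 1)
  have hMsm : StronglyMeasurable[𝓕 (t + 1)] (M (t + 1)) :=
    hMt ▸ hX.sub (stronglyMeasurable_condExp.mono (𝓕.mono t.le_succ))
  have hM0 : μ[M (t + 1) | 𝓕 t] =ᵐ[μ] 0 :=
    hMt ▸ condExp_sub_condExp_ae_eq_zero (𝓕.le t) (hint _ hX)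
  have hdrift : ∀ G ∈ [F, F'], ∀ {Y : Ω → Fin K → ℝ} {Z : Ω → Fin K → Fin N → ℝ},
      StronglyMeasurable[𝓕 t] Y → StronglyMeasurable[𝓕 t] Z →
      StronglyMeasurable[𝓕 t] fun ω => Y ω - G ω t (Y ω) (Z ω) :=
    fun G hG _ _ hY hZ => hY.sub (hFmeas G hG _ _ hY hZ)
  refine ⟨fun Yt Zt hY _ hZ ⟨C, hC⟩ => ?_, fun Yt Zt hY _ hZ _ => ?_⟩
  · filter_upwards [condExp_add_mulVec_of_condExp_eq_zero (𝓕.le t) (hdrift F (by simp) hY hZ)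
      (hint t (hdrift F (by simp) hY hZ)) hZ (fun ω => norm_le_max_of_forall_abs_le (hC ω))
      (hint _ hMsm) hM0] with ω hω
    exact (sub_sub_cancel _ _).symm.trans (congrArg (Yt ω - ·) hω.symm)
  · obtain ⟨Y', hY', hY'eq⟩ := exists_stronglyMeasurable_comap_apply_eq (hfin t).countable
      (G := fun ω y => y - F' ω t y (Zt ω))
      (fun y => h𝓕 t ▸ hdrift F' (by simp) stronglyMeasurable_const hZ)
      (h𝓕 t ▸ hdrift F (by simp) hY hZ)
    have hsame : ∀ᵐ ω ∂μ, Y' ω - F' ω t (Y' ω) (Zt ω) = Yt ω - F ω t (Yt ω) (Zt ω) := by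
      filter_upwards [hFbij F' (by simp) Zt] with ω hω using hY'eq ω (hω.2 _)
    have hYnext := ((hdrift F (by simp) hY hZ).mono (𝓕.mono t.le_succ)).add
      ((hZ.mono (𝓕.mono t.le_succ)).mulVec hMsm)
    have hYY' := hO _ hYnext (StronglyMeasurable.exists_bound_of_comap (hfin (t + 1))
      (h𝓕 (t + 1) ▸ hYnext)) Yt Zt Y' Zt hY hZ (h𝓕 t ▸ hY') hZ (ae_of_all _ fun _ => rfl)
      (hsame.mono fun ω h => by rw [h]; rfl)
    filter_upwards [hYY', hsame] with ω hYω hω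
    rw [← hYω] at hω
    exact (sub_right_injective hω).symm

/-- the driver is uniquely determined by the one-step values `𝔒_t`: if two
drivers (satisfying the existence theorem) generate the same one-step solution pairs
`(Y_t, Y_{t+1})`, then they agree a.s. at time `t`, and the driver is recovered by the
formula `F(ω,t,Y_t,Z_t) = Y_t - E[Y_{t+1}|𝓕 t]` where
`Y_{t+1} = Y_t - F(ω,t,Y_t,Z_t) + Z_t M_{t+1}`. -/
theorem driver_determined_by_one_step_values
    {Ω : Type*} {m0 : MeasurableSpace Ω} {μ : Measure Ω} [IsProbabilityMeasure μ]
    {N K : ℕ} (𝓕 : Filtration ℕ m0)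
    (X : ℕ → Ω → (Fin N → ℝ))
    (hXval : ∀ t ω, ∃ i : Fin N, X t ω = fun j => if j = i then (1 : ℝ) else 0)
    (h𝓕 : ∀ t, (𝓕 t : MeasurableSpace Ω)
      = MeasurableSpace.comap (fun ω (s : Fin (t + 1)) => X (s : ℕ) ω) inferInstance)
    (hXint : ∀ t, Integrable (X t) μ)
    (M : ℕ → Ω → (Fin N → ℝ))
    (hM : ∀ t, M t = X t - μ[X t | 𝓕 (t - 1)])
    (t : ℕ)
    (F F' : Ω → ℕ → (Fin K → ℝ) → (Fin K → Fin N → ℝ) → (Fin K → ℝ))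
    (hFmeas : ∀ G ∈ [F, F'], ∀ (Y : Ω → Fin K → ℝ) (Z : Ω → Fin K → Fin N → ℝ),
      StronglyMeasurable[𝓕 t] Y → StronglyMeasurable[𝓕 t] Z →
      StronglyMeasurable[𝓕 t] (fun ω => G ω t (Y ω) (Z ω)))
    (hFinv : ∀ G ∈ [F, F'], ∀ (Y : Ω → Fin K → ℝ) (Z1 Z2 : Ω → Fin K → Fin N → ℝ),
      (∀ᵐ ω ∂μ, (fun i => ∑ j, Z1 ω i j * M (t + 1) ω j)
          = (fun i => ∑ j, Z2 ω i j * M (t + 1) ω j)) →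
      ∀ᵐ ω ∂μ, G ω t (Y ω) (Z1 ω) = G ω t (Y ω) (Z2 ω))
    (hFbij : ∀ G ∈ [F, F'], ∀ Z : Ω → Fin K → Fin N → ℝ,
      ∀ᵐ ω ∂μ, Function.Bijective (fun y : Fin K → ℝ => y - G ω t y (Z ω)))
    -- F and F' generate the same one-step values 𝔒_t: for every terminal value Y_{t+1},
    -- the corresponding time-t solutions agree
    (hO : ∀ Ynext : Ω → Fin K → ℝ,
      StronglyMeasurable[𝓕 (t + 1)] Ynext → (∃ C, ∀ ω, ‖Ynext ω‖ ≤ C) →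
      ∀ (Yt : Ω → Fin K → ℝ) (Zt : Ω → Fin K → Fin N → ℝ)
        (Yt' : Ω → Fin K → ℝ) (Zt' : Ω → Fin K → Fin N → ℝ),
        StronglyMeasurable[𝓕 t] Yt → StronglyMeasurable[𝓕 t] Zt →
        StronglyMeasurable[𝓕 t] Yt' → StronglyMeasurable[𝓕 t] Zt' →
        (∀ᵐ ω ∂μ, Yt ω - F ω t (Yt ω) (Zt ω)
            + (fun i => ∑ j, Zt ω i j * M (t + 1) ω j) = Ynext ω) →
        (∀ᵐ ω ∂μ, Yt' ω - F' ω t (Yt' ω) (Zt' ω)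
            + (fun i => ∑ j, Zt' ω i j * M (t + 1) ω j) = Ynext ω) →
        Yt =ᵐ[μ] Yt') :
    -- conclusion: the driver is recovered from 𝔒_t and hence uniquely determined
    (∀ (Yt : Ω → Fin K → ℝ) (Zt : Ω → Fin K → Fin N → ℝ),
      StronglyMeasurable[𝓕 t] Yt → (∃ C, ∀ ω, ‖Yt ω‖ ≤ C) →
      StronglyMeasurable[𝓕 t] Zt → (∃ C, ∀ ω i j, |Zt ω i j| ≤ C) →
      (fun ω => F ω t (Yt ω) (Zt ω)) =ᵐ[μ]
        fun ω => Yt ω - (μ[(fun ω' => Yt ω' - F ω' t (Yt ω') (Zt ω')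
            + (fun i => ∑ j, Zt ω' i j * M (t + 1) ω' j)) | 𝓕 t]) ω) ∧
    (∀ (Yt : Ω → Fin K → ℝ) (Zt : Ω → Fin K → Fin N → ℝ),
      StronglyMeasurable[𝓕 t] Yt → (∃ C, ∀ ω, ‖Yt ω‖ ≤ C) →
      StronglyMeasurable[𝓕 t] Zt → (∃ C, ∀ ω i j, |Zt ω i j| ≤ C) →
      (fun ω => F ω t (Yt ω) (Zt ω)) =ᵐ[μ] fun ω => F' ω t (Yt ω) (Zt ω)) :=
  driver_determined_by_one_step_values_general 𝓕 X hXval h𝓕 M hM t F F' hFmeas hFbij hO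
end

section
/- (Static-to-dynamic extension) Let E: L^2(F_T) → L^2(F_0) be scalar-valued and satisfy: (i) F_t-consistency: for each Q and t there exists F_t-measurable Y_t with E(I_A Q) = E(I_A Y_t) for all A ∈ F_t; (ii) F_0-triviality: E(Q)=Q for F_0-measurable Q; (iii) strict monotonicity: Q ≥ Q' a.s. implies E(Q) ≥ E(Q'), with equality iff Q = Q' a.s. Then there exists a unique F_t-consistent dynamic nonlinear expectation E(·|F_t) with E(Q|F_0) = E(Q) for all Q; it is given by E(Q|F_t) := Y_t, and the Y_t in (i) is unique up to a.s. equality. -/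
open MeasureTheory

/-- static-to-dynamic extension.  A scalar map `E₀ : L²(𝓕 T) → L²(𝓕 0)`
which is `𝓕 t`-consistent, `𝓕 0`-trivial and strictly monotone extends to a unique
`𝓕 t`-consistent dynamic nonlinear expectation agreeing with it at time `0`; it is given by
`𝔼(Q|𝓕 t) := Y_t` with `Y_t` the (a.s. unique) variable from consistency. -/
theorem static_to_dynamic
    {Ω : Type*} {m0 : MeasurableSpace Ω} {μ : Measure Ω} [IsProbabilityMeasure μ]
    {N T : ℕ} (𝓕 : Filtration ℕ m0)
    (X : ℕ → Ω → Fin N)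
    (h𝓕 : ∀ t, (𝓕 t : MeasurableSpace Ω)
      = MeasurableSpace.comap (fun ω (s : Fin (t + 1)) => X (s : ℕ) ω) inferInstance)
    (E₀ : (Ω → ℝ) → Ω → ℝ)
    (hE₀meas : ∀ Q : Ω → ℝ, StronglyMeasurable[𝓕 T] Q → StronglyMeasurable[𝓕 0] (E₀ Q))
    -- (i) 𝓕 t-consistency
    (hconsist : ∀ Q : Ω → ℝ, StronglyMeasurable[𝓕 T] Q → ∀ t ≤ T,
      ∃ Y : Ω → ℝ, StronglyMeasurable[𝓕 t] Y ∧
        ∀ A : Set Ω, MeasurableSet[𝓕 t] A →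
          E₀ (A.indicator Q) =ᵐ[μ] E₀ (A.indicator Y))
    -- (ii) 𝓕 0-triviality
    (htriv : ∀ Q : Ω → ℝ, StronglyMeasurable[𝓕 0] Q → E₀ Q =ᵐ[μ] Q)
    -- (iii) strict monotonicity
    (hmono : ∀ Q Q' : Ω → ℝ, StronglyMeasurable[𝓕 T] Q → StronglyMeasurable[𝓕 T] Q' →
      (∀ᵐ ω ∂μ, Q' ω ≤ Q ω) →
      (∀ᵐ ω ∂μ, E₀ Q' ω ≤ E₀ Q ω) ∧ ((E₀ Q =ᵐ[μ] E₀ Q') ↔ Q =ᵐ[μ] Q')) :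
    -- there is a unique dynamic nonlinear expectation extending E₀, given by the Y_t of (i)
    ∃ 𝔼 : (Ω → ℝ) → ℕ → Ω → ℝ,
      ((∀ t ≤ T, ∀ Q : Ω → ℝ, StronglyMeasurable[𝓕 T] Q → StronglyMeasurable[𝓕 t] (𝔼 Q t)) ∧
        -- monotonicity (with strict comparison)
        (∀ t ≤ T, ∀ Q Q' : Ω → ℝ, StronglyMeasurable[𝓕 T] Q → StronglyMeasurable[𝓕 T] Q' →
          (∀ᵐ ω ∂μ, Q' ω ≤ Q ω) →
          (∀ᵐ ω ∂μ, 𝔼 Q' t ω ≤ 𝔼 Q t ω) ∧ ((𝔼 Q t =ᵐ[μ] 𝔼 Q' t) → Q =ᵐ[μ] Q')) ∧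
        -- 𝓕 t-triviality
        (∀ t ≤ T, ∀ Q : Ω → ℝ, StronglyMeasurable[𝓕 t] Q → 𝔼 Q t =ᵐ[μ] Q) ∧
        -- tower property
        (∀ s t, s ≤ t → t ≤ T → ∀ Q : Ω → ℝ, StronglyMeasurable[𝓕 T] Q →
          𝔼 (𝔼 Q t) s =ᵐ[μ] 𝔼 Q s) ∧
        -- locality
        (∀ t ≤ T, ∀ Q : Ω → ℝ, StronglyMeasurable[𝓕 T] Q →
          ∀ A : Set Ω, MeasurableSet[𝓕 t] A →
            A.indicator (𝔼 Q t) =ᵐ[μ] 𝔼 (A.indicator Q) t)) ∧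
      -- agreement with E₀ at time 0
      (∀ Q : Ω → ℝ, StronglyMeasurable[𝓕 T] Q → 𝔼 Q 0 =ᵐ[μ] E₀ Q) ∧
      -- 𝔼(Q|𝓕 t) is the (a.s. unique) Y_t from the consistency property
      (∀ Q : Ω → ℝ, StronglyMeasurable[𝓕 T] Q → ∀ t ≤ T,
        ∀ Y : Ω → ℝ, StronglyMeasurable[𝓕 t] Y →
          (∀ A : Set Ω, MeasurableSet[𝓕 t] A →
            E₀ (A.indicator Q) =ᵐ[μ] E₀ (A.indicator Y)) →
          Y =ᵐ[μ] 𝔼 Q t) ∧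
      -- uniqueness of the dynamic extension
      (∀ 𝔼' : (Ω → ℝ) → ℕ → Ω → ℝ,
        ((∀ t ≤ T, ∀ Q : Ω → ℝ, StronglyMeasurable[𝓕 T] Q →
            StronglyMeasurable[𝓕 t] (𝔼' Q t)) ∧
          (∀ t ≤ T, ∀ Q Q' : Ω → ℝ, StronglyMeasurable[𝓕 T] Q → StronglyMeasurable[𝓕 T] Q' →
            (∀ᵐ ω ∂μ, Q' ω ≤ Q ω) →
            (∀ᵐ ω ∂μ, 𝔼' Q' t ω ≤ 𝔼' Q t ω) ∧ ((𝔼' Q t =ᵐ[μ] 𝔼' Q' t) → Q =ᵐ[μ] Q')) ∧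
          (∀ t ≤ T, ∀ Q : Ω → ℝ, StronglyMeasurable[𝓕 t] Q → 𝔼' Q t =ᵐ[μ] Q) ∧
          (∀ s t, s ≤ t → t ≤ T → ∀ Q : Ω → ℝ, StronglyMeasurable[𝓕 T] Q →
            𝔼' (𝔼' Q t) s =ᵐ[μ] 𝔼' Q s) ∧
          (∀ t ≤ T, ∀ Q : Ω → ℝ, StronglyMeasurable[𝓕 T] Q →
            ∀ A : Set Ω, MeasurableSet[𝓕 t] A →
              A.indicator (𝔼' Q t) =ᵐ[μ] 𝔼' (A.indicator Q) t)) →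
        (∀ Q : Ω → ℝ, StronglyMeasurable[𝓕 T] Q → 𝔼' Q 0 =ᵐ[μ] E₀ Q) →
        ∀ t ≤ T, ∀ Q : Ω → ℝ, StronglyMeasurable[𝓕 T] Q → 𝔼' Q t =ᵐ[μ] 𝔼 Q t) := by
    classical
  set Emap : (Ω → ℝ) → ℕ → Ω → ℝ := fun Q t =>
    if h : StronglyMeasurable[𝓕 T] Q ∧ t ≤ T then (hconsist Q h.1 t h.2).choose else Q
    with hEmapDef
  have hspec : ∀ (Q : Ω → ℝ), StronglyMeasurable[𝓕 T] Q → ∀ t, t ≤ T →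
      StronglyMeasurable[𝓕 t] (Emap Q t) ∧
      ∀ A : Set Ω, MeasurableSet[𝓕 t] A →
        E₀ (A.indicator Q) =ᵐ[μ] E₀ (A.indicator (Emap Q t)) := by
    intro Q hQ t ht
    have heq : Emap Q t = (hconsist Q hQ t ht).choose := dif_pos ⟨hQ, ht⟩
    rw [heq]
    exact (hconsist Q hQ t ht).choose_spec
  have hF : ∀ {s t : ℕ}, s ≤ t → (𝓕 s : MeasurableSpace Ω) ≤ 𝓕 t := fun h => 𝓕.mono h
  have ind_le : ∀ (A : Set Ω) (f g : Ω → ℝ), (∀ᵐ ω ∂μ, f ω ≤ g ω) →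
      ∀ᵐ ω ∂μ, A.indicator f ω ≤ A.indicator g ω := by
    intro A f g h
    filter_upwards [h] with ω hω
    by_cases hA : ω ∈ A
    · simpa [Set.indicator_of_mem hA] using hω
    · simp [Set.indicator_of_notMem hA]
  have core : ∀ t, t ≤ T → ∀ Y Y' : Ω → ℝ,
      StronglyMeasurable[𝓕 t] Y → StronglyMeasurable[𝓕 t] Y' →
      (E₀ (({ω | Y ω < Y' ω}).indicator Y) =ᵐ[μ]
        E₀ (({ω | Y ω < Y' ω}).indicator Y')) →
      ∀ᵐ ω ∂μ, Y' ω ≤ Y ω := by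
    intro t ht Y Y' hY hY' hEeq
    set A : Set Ω := {ω | Y ω < Y' ω} with hA
    have hAmeas : MeasurableSet[𝓕 t] A := measurableSet_lt hY.measurable hY'.measurable
    have hAT : MeasurableSet[𝓕 T] A := hF ht _ hAmeas
    have hYT := hY.mono (hF ht)
    have hY'T := hY'.mono (hF ht)
    have hle : ∀ ω, A.indicator Y ω ≤ A.indicator Y' ω := by
      intro ω
      by_cases hω : ω ∈ A
      · simpa [Set.indicator_of_mem hω] using le_of_lt hω
      · simp [Set.indicator_of_notMem hω]
    obtain ⟨-, hiff⟩ := hmono (A.indicator Y') (A.indicator Y)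
      (hY'T.indicator hAT) (hYT.indicator hAT) (Filter.Eventually.of_forall hle)
    have hind := hiff.mp hEeq.symm
    filter_upwards [hind] with ω hω
    by_contra hcon
    push_neg at hcon
    have hmem : ω ∈ A := hcon
    rw [Set.indicator_of_mem hmem, Set.indicator_of_mem hmem] at hω
    exact absurd hω (ne_of_gt hcon)
  have uniqY : ∀ t, t ≤ T → ∀ Y Y' : Ω → ℝ,
      StronglyMeasurable[𝓕 t] Y → StronglyMeasurable[𝓕 t] Y' →
      (∀ A : Set Ω, MeasurableSet[𝓕 t] A →
        E₀ (A.indicator Y) =ᵐ[μ] E₀ (A.indicator Y')) →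
      Y =ᵐ[μ] Y' := by
    intro t ht Y Y' hY hY' h
    have h1 := core t ht Y Y' hY hY' (h _ (measurableSet_lt hY.measurable hY'.measurable))
    have h2 := core t ht Y' Y hY' hY (h _ (measurableSet_lt hY'.measurable hY.measurable)).symm
    filter_upwards [h1, h2] with ω hω1 hω2
    exact le_antisymm hω2 hω1
  have monoE : ∀ t, t ≤ T → ∀ Q Q' : Ω → ℝ,
      StronglyMeasurable[𝓕 T] Q → StronglyMeasurable[𝓕 T] Q' →
      (∀ᵐ ω ∂μ, Q' ω ≤ Q ω) →
      (∀ᵐ ω ∂μ, Emap Q' t ω ≤ Emap Q t ω) ∧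
        ((Emap Q t =ᵐ[μ] Emap Q' t) → Q =ᵐ[μ] Q') := by
    intro t ht Q Q' hQ hQ' hle
    obtain ⟨hYm, hYc⟩ := hspec Q hQ t ht
    obtain ⟨hY'm, hY'c⟩ := hspec Q' hQ' t ht
    constructor
    · apply core t ht _ _ hYm hY'm
      have hAmeas : MeasurableSet[𝓕 t] {ω | Emap Q t ω < Emap Q' t ω} :=
        measurableSet_lt hYm.measurable hY'm.measurable
      set A : Set Ω := {ω | Emap Q t ω < Emap Q' t ω} with hA
      have hAT : MeasurableSet[𝓕 T] A := hF ht _ hAmeas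
      have e1 := hYc A hAmeas
      have e2 := hY'c A hAmeas
      have e3 : ∀ᵐ ω ∂μ, E₀ (A.indicator Q') ω ≤ E₀ (A.indicator Q) ω :=
        (hmono _ _ (hQ.indicator hAT) (hQ'.indicator hAT) (ind_le A Q' Q hle)).1
      have hYindle : ∀ ω, A.indicator (Emap Q t) ω ≤ A.indicator (Emap Q' t) ω := by
        intro ω
        by_cases hω : ω ∈ A
        · simpa [Set.indicator_of_mem hω] using le_of_lt hω
        · simp [Set.indicator_of_notMem hω]
      have e4 := (hmono (A.indicator (Emap Q' t)) (A.indicator (Emap Q t))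
        ((hY'm.mono (hF ht)).indicator hAT) ((hYm.mono (hF ht)).indicator hAT)
        (Filter.Eventually.of_forall hYindle)).1
      filter_upwards [e1, e2, e3, e4] with ω h1 h2 h3 h4
      have h5 : E₀ (A.indicator (Emap Q' t)) ω ≤ E₀ (A.indicator (Emap Q t)) ω := by
        rw [← h1, ← h2]; exact h3
      exact le_antisymm h4 h5
    · intro heq
      have hYT := hYm.mono (hF ht)
      have hY'T := hY'm.mono (hF ht)
      have hEYY' : E₀ (Emap Q t) =ᵐ[μ] E₀ (Emap Q' t) :=
        (hmono _ _ hYT hY'T heq.symm.le).2.mpr heq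
      have eQ : E₀ Q =ᵐ[μ] E₀ (Emap Q t) := by
        simpa [Set.indicator_univ] using hYc Set.univ MeasurableSet.univ
      have eQ' : E₀ Q' =ᵐ[μ] E₀ (Emap Q' t) := by
        simpa [Set.indicator_univ] using hY'c Set.univ MeasurableSet.univ
      exact (hmono Q Q' hQ hQ' hle).2.mp (eQ.trans (hEYY'.trans eQ'.symm))
  have trivE : ∀ t, t ≤ T → ∀ Q : Ω → ℝ, StronglyMeasurable[𝓕 t] Q →
      Emap Q t =ᵐ[μ] Q := by
    intro t ht Q hQt
    have hQT := hQt.mono (hF ht)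
    obtain ⟨hYm, hYc⟩ := hspec Q hQT t ht
    exact (uniqY t ht Q (Emap Q t) hQt hYm hYc).symm
  have charE : ∀ Q : Ω → ℝ, StronglyMeasurable[𝓕 T] Q → ∀ t, t ≤ T →
      ∀ Y : Ω → ℝ, StronglyMeasurable[𝓕 t] Y →
      (∀ A : Set Ω, MeasurableSet[𝓕 t] A →
        E₀ (A.indicator Q) =ᵐ[μ] E₀ (A.indicator Y)) →
      Y =ᵐ[μ] Emap Q t := by
    intro Q hQ t ht Y hY hYc
    obtain ⟨hZm, hZc⟩ := hspec Q hQ t ht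
    exact uniqY t ht Y (Emap Q t) hY hZm (fun A hA => ((hYc A hA).symm.trans (hZc A hA)))
  have towerE : ∀ s t : ℕ, s ≤ t → t ≤ T → ∀ Q : Ω → ℝ, StronglyMeasurable[𝓕 T] Q →
      Emap (Emap Q t) s =ᵐ[μ] Emap Q s := by
    intro s t hst htT Q hQ
    have hsT := hst.trans htT
    obtain ⟨hYtm, hYtc⟩ := hspec Q hQ t htT
    obtain ⟨hYsm, hYsc⟩ := hspec Q hQ s hsT
    have hYtT := hYtm.mono (hF htT)
    obtain ⟨hZm, hZc⟩ := hspec (Emap Q t) hYtT s hsT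
    apply uniqY s hsT _ _ hZm hYsm
    intro A hA
    have hAt : MeasurableSet[𝓕 t] A := hF hst _ hA
    exact (hZc A hA).symm.trans ((hYtc A hAt).symm.trans (hYsc A hA))
  have localE : ∀ t, t ≤ T → ∀ Q : Ω → ℝ, StronglyMeasurable[𝓕 T] Q →
      ∀ A : Set Ω, MeasurableSet[𝓕 t] A →
      A.indicator (Emap Q t) =ᵐ[μ] Emap (A.indicator Q) t := by
    intro t ht Q hQ A hA
    have hAT : MeasurableSet[𝓕 T] A := hF ht _ hA
    obtain ⟨hYm, hYc⟩ := hspec Q hQ t ht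
    obtain ⟨hWm, hWc⟩ := hspec (A.indicator Q) (hQ.indicator hAT) t ht
    apply uniqY t ht _ _ (hYm.indicator hA) hWm
    intro B hB
    have hBA : MeasurableSet[𝓕 t] (B ∩ A) := hB.inter hA
    rw [Set.indicator_indicator]
    refine ((hYc _ hBA).symm).trans ?_
    rw [← Set.indicator_indicator]
    exact hWc B hB
  have agreeE : ∀ Q : Ω → ℝ, StronglyMeasurable[𝓕 T] Q → Emap Q 0 =ᵐ[μ] E₀ Q := by
    intro Q hQ
    obtain ⟨hYm, hYc⟩ := hspec Q hQ 0 (Nat.zero_le T)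
    have h1 : E₀ Q =ᵐ[μ] E₀ (Emap Q 0) := by
      simpa [Set.indicator_univ] using hYc Set.univ MeasurableSet.univ
    exact (htriv _ hYm).symm.trans h1.symm
  refine ⟨Emap, ⟨fun t ht Q hQ => (hspec Q hQ t ht).1, monoE, trivE, towerE, localE⟩,
    agreeE, charE, ?_⟩
  rintro E' ⟨hmeas', hmono', htriv', htower', hlocal'⟩ hagree' t ht Q hQ
  have hcong : ∀ u, u ≤ T → ∀ f g : Ω → ℝ, StronglyMeasurable[𝓕 T] f →
      StronglyMeasurable[𝓕 T] g → f =ᵐ[μ] g → E' f u =ᵐ[μ] E' g u := by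
    intro u hu f g hf hg hfg
    have h1 := (hmono' u hu f g hf hg hfg.symm.le).1
    have h2 := (hmono' u hu g f hg hf hfg.le).1
    filter_upwards [h1, h2] with ω a b
    exact le_antisymm b a
  apply charE Q hQ t ht (E' Q t) (hmeas' t ht Q hQ)
  intro A hA
  have hAT : MeasurableSet[𝓕 T] A := hF ht _ hA
  have hIAQ : StronglyMeasurable[𝓕 T] (A.indicator Q) := hQ.indicator hAT
  have hEt : StronglyMeasurable[𝓕 t] (E' Q t) := hmeas' t ht Q hQ
  have hIAE : StronglyMeasurable[𝓕 T] (A.indicator (E' Q t)) :=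
    (hEt.mono (hF ht)).indicator hAT
  have hE'IAQt : StronglyMeasurable[𝓕 T] (E' (A.indicator Q) t) :=
    (hmeas' t ht _ hIAQ).mono (hF ht)
  have c1 : E₀ (A.indicator Q) =ᵐ[μ] E' (A.indicator Q) 0 := (hagree' _ hIAQ).symm
  have c2 : E' (A.indicator Q) 0 =ᵐ[μ] E' (E' (A.indicator Q) t) 0 :=
    (htower' 0 t (Nat.zero_le t) ht _ hIAQ).symm
  have c3 : E' (A.indicator Q) t =ᵐ[μ] A.indicator (E' Q t) := (hlocal' t ht Q hQ A hA).symm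
  have c4 : E' (E' (A.indicator Q) t) 0 =ᵐ[μ] E' (A.indicator (E' Q t)) 0 :=
    hcong 0 (Nat.zero_le T) _ _ hE'IAQt hIAE c3
  have c5 : E' (A.indicator (E' Q t)) 0 =ᵐ[μ] E₀ (A.indicator (E' Q t)) := hagree' _ hIAE
  exact c1.trans (c2.trans (c4.trans c5))
end
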